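/- There exists a k-algebra automorphism τ of 𝒢 satisfying τ(a) = a + u, τ(u) = −u, τ(c) = c, τ(b) = b, and τ ∘ τ = id. -/
import Mathlib


open Polynomial

noncomputable section

/-- `h = c·g'(c)` in the free algebra on generators `a = ι 0`, `b = ι 1`, `c = ι 2`,
`u = ι 3`. -/
def Gh (k : Type) [Field k] (g : k[X]) : FreeAlgebra k (Fin 4) :=
  FreeAlgebra.ι k 2 * aeval (FreeAlgebra.ι k 2) (derivative g)

/-- `γ = h + u + 2a` in the free algebra. -/
def Gγ (k : Type) [Field k] (g : k[X]) : FreeAlgebra k (Fin 4) :=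
  Gh k g + FreeAlgebra.ι k 3 + 2 * FreeAlgebra.ι k 0

/-- Defining relations of the generalized Jordanian matrix algebra `𝒢` (for `f = X·g`):
with `a = ι 0`, `b = ι 1`, `c = ι 2`, `u = ι 3`, `h = c·g'(c)`, `γ = h + u + 2a`,
the relations are `a·c = c·a + c·g(c)`, `c·u = u·c`, `a·u = u·a + u·g(c)`,
`b·c = c·b + c·γ`, `b·u = u·b + u·γ`, and `b·a = (a + h)·b + (h − u)·a`. -/
inductive GRel (k : Type) [Field k] (g : k[X]) :
    FreeAlgebra k (Fin 4) → FreeAlgebra k (Fin 4) → Prop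
  | ac : GRel k g (FreeAlgebra.ι k 0 * FreeAlgebra.ι k 2)
      (FreeAlgebra.ι k 2 * FreeAlgebra.ι k 0 +
        FreeAlgebra.ι k 2 * aeval (FreeAlgebra.ι k 2) g)
  | cu : GRel k g (FreeAlgebra.ι k 2 * FreeAlgebra.ι k 3)
      (FreeAlgebra.ι k 3 * FreeAlgebra.ι k 2)
  | au : GRel k g (FreeAlgebra.ι k 0 * FreeAlgebra.ι k 3)
      (FreeAlgebra.ι k 3 * FreeAlgebra.ι k 0 +
        FreeAlgebra.ι k 3 * aeval (FreeAlgebra.ι k 2) g)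
  | bc : GRel k g (FreeAlgebra.ι k 1 * FreeAlgebra.ι k 2)
      (FreeAlgebra.ι k 2 * FreeAlgebra.ι k 1 + FreeAlgebra.ι k 2 * Gγ k g)
  | bu : GRel k g (FreeAlgebra.ι k 1 * FreeAlgebra.ι k 3)
      (FreeAlgebra.ι k 3 * FreeAlgebra.ι k 1 + FreeAlgebra.ι k 3 * Gγ k g)
  | ba : GRel k g (FreeAlgebra.ι k 1 * FreeAlgebra.ι k 0)
      ((FreeAlgebra.ι k 0 + Gh k g) * FreeAlgebra.ι k 1 +
        (Gh k g - FreeAlgebra.ι k 3) * FreeAlgebra.ι k 0)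

/-- The generalized Jordanian matrix algebra `𝒢` (denoted `𝒢_f` for `f = X·g`). -/
abbrev GAlg (k : Type) [Field k] (g : k[X]) := RingQuot (GRel k g)

/-- The generator `a` of `𝒢`. -/
def Ga (k : Type) [Field k] (g : k[X]) : GAlg k g :=
  RingQuot.mkAlgHom k (GRel k g) (FreeAlgebra.ι k 0)

/-- The generator `b` of `𝒢`. -/
def Gb (k : Type) [Field k] (g : k[X]) : GAlg k g :=
  RingQuot.mkAlgHom k (GRel k g) (FreeAlgebra.ι k 1)

/-- The generator `c` of `𝒢`. -/
def Gc (k : Type) [Field k] (g : k[X]) : GAlg k g :=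
  RingQuot.mkAlgHom k (GRel k g) (FreeAlgebra.ι k 2)

/-- The generator `u` of `𝒢`. -/
def Gu (k : Type) [Field k] (g : k[X]) : GAlg k g :=
  RingQuot.mkAlgHom k (GRel k g) (FreeAlgebra.ι k 3)

/-- The central element `z = g(c)·b + (g(c) − u)·a − a²` of `𝒢`. -/
def Gz (k : Type) [Field k] (g : k[X]) : GAlg k g :=
  aeval (Gc k g) g * Gb k g + (aeval (Gc k g) g - Gu k g) * Ga k g - Ga k g ^ 2

namespace Gaux

variable (k : Type) [Field k] (g : k[X])

/-- `h = c·g'(c)` in `𝒢`. -/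
def GH : GAlg k g := Gc k g * aeval (Gc k g) (derivative g)

/-- `γ = h + u + 2a` in `𝒢`. -/
def GΓ : GAlg k g := GH k g + Gu k g + 2 * Ga k g

lemma mk_aeval (p : k[X]) :
    RingQuot.mkAlgHom k (GRel k g) (aeval (FreeAlgebra.ι k 2) p) = aeval (Gc k g) p := by
  rw [Gc, aeval_algHom_apply]

lemma mk_Gh : RingQuot.mkAlgHom k (GRel k g) (Gh k g) = GH k g := by
  rw [Gh, map_mul, mk_aeval, GH, Gc]

lemma mk_Gγ : RingQuot.mkAlgHom k (GRel k g) (Gγ k g) = GΓ k g := by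
  rw [Gγ, map_add, map_add, map_mul, map_ofNat, mk_Gh, GΓ, Ga, Gu]

lemma r1 : Ga k g * Gc k g = Gc k g * Ga k g + Gc k g * aeval (Gc k g) g := by
  have := RingQuot.mkAlgHom_rel k (GRel.ac (k := k) (g := g))
  simpa only [map_mul, map_add, mk_aeval, Ga, Gc] using this

lemma r2 : Gc k g * Gu k g = Gu k g * Gc k g := by
  have := RingQuot.mkAlgHom_rel k (GRel.cu (k := k) (g := g))
  simpa only [map_mul, Gc, Gu] using this

lemma r3 : Ga k g * Gu k g = Gu k g * Ga k g + Gu k g * aeval (Gc k g) g := by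
  have := RingQuot.mkAlgHom_rel k (GRel.au (k := k) (g := g))
  simpa only [map_mul, map_add, mk_aeval, Ga, Gu] using this

lemma r4 : Gb k g * Gc k g = Gc k g * Gb k g + Gc k g * GΓ k g := by
  have := RingQuot.mkAlgHom_rel k (GRel.bc (k := k) (g := g))
  simpa only [map_mul, map_add, mk_Gγ, Gb, Gc] using this

lemma r5 : Gb k g * Gu k g = Gu k g * Gb k g + Gu k g * GΓ k g := by
  have := RingQuot.mkAlgHom_rel k (GRel.bu (k := k) (g := g))
  simpa only [map_mul, map_add, mk_Gγ, Gb, Gu] using this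

lemma r6 : Gb k g * Ga k g =
    (Ga k g + GH k g) * Gb k g + (GH k g - Gu k g) * Ga k g := by
  have := RingQuot.mkAlgHom_rel k (GRel.ba (k := k) (g := g))
  simpa only [map_mul, map_add, map_sub, mk_Gh, Ga, Gb, Gu] using this

lemma commUc : Commute (Gu k g) (Gc k g) := (r2 k g).symm

lemma commU_aeval (p : k[X]) : Commute (Gu k g) (aeval (Gc k g) p) := by
  induction p using Polynomial.induction_on' with
  | add p q hp hq => rw [map_add]; exact hp.add_right hq
  | monomial n a =>
    rw [aeval_monomial]
    exact Commute.mul_right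
      (show Commute (Gu k g) ((algebraMap k (GAlg k g)) a) from
        (Algebra.commutes a (Gu k g)).symm)
      ((commUc k g).pow_right n)

lemma commUH : Gu k g * GH k g = GH k g * Gu k g :=
  ((commUc k g).mul_right (commU_aeval k g (derivative g)))


section generic
variable {R : Type} [Ring R] (a b c u gg h : R)

lemma key_ac (h1 : a * c = c * a + c * gg) (h2 : c * u = u * c) :
    (a + u) * c = c * (a + u) + c * gg := by
  rw [add_mul, h1, ← h2]; noncomm_ring

lemma key_cu (h2 : c * u = u * c) : c * -u = -u * c := by
  rw [show c * -u = -(c * u) by noncomm_ring, h2]; noncomm_ring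

lemma key_au (h3 : a * u = u * a + u * gg) :
    (a + u) * -u = -u * (a + u) + -u * gg := by
  rw [show (a + u) * -u = -(a * u) - u * u by noncomm_ring, h3]; noncomm_ring

lemma key_bc (h4 : b * c = c * b + c * (h + u + 2 * a)) :
    b * c = c * b + c * (h + -u + 2 * (a + u)) := by
  rw [h4]; noncomm_ring

lemma key_bu (h5 : b * u = u * b + u * (h + u + 2 * a)) :
    b * -u = -u * b + -u * (h + -u + 2 * (a + u)) := by
  rw [show b * -u = -(b * u) by noncomm_ring, h5]; noncomm_ring

lemma key_ba (h6 : b * a = (a + h) * b + (h - u) * a)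
    (h5 : b * u = u * b + u * (h + u + 2 * a)) (huh : u * h = h * u) :
    b * (a + u) = (a + u + h) * b + (h - -u) * (a + u) := by
  rw [mul_add, h6, h5,
    show u * (h + u + 2 * a) = h * u + u * u + 2 * (u * a) by
      rw [mul_add, mul_add, huh]; noncomm_ring]
  noncomm_ring

end generic

/-- The values of `τ` on the generators. -/
def τvals : Fin 4 → GAlg k g
  | 0 => Ga k g + Gu k g
  | 1 => Gb k g
  | 2 => Gc k g
  | 3 => -Gu k g

/-- `τ` as a hom on the free algebra. -/
def τ0 : FreeAlgebra k (Fin 4) →ₐ[k] GAlg k g := FreeAlgebra.lift k (τvals k g)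

lemma τ0_apply (i : Fin 4) : τ0 k g (FreeAlgebra.ι k i) = τvals k g i := by
  rw [τ0, FreeAlgebra.lift_ι_apply]

lemma τ0_aeval (p : k[X]) :
    τ0 k g (aeval (FreeAlgebra.ι k 2) p) = aeval (Gc k g) p := by
  have h2 : Gc k g = τ0 k g (FreeAlgebra.ι k 2) := by rw [τ0_apply]; rfl
  rw [h2, aeval_algHom_apply]

lemma τ0_Gh : τ0 k g (Gh k g) = GH k g := by
  rw [Gh, map_mul, τ0_aeval, GH, τ0_apply]; rfl

lemma τ0_rel : ∀ ⦃x y⦄, GRel k g x y → τ0 k g x = τ0 k g y := by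
  intro x y r
  induction r with
  | ac =>
    simp only [map_mul, map_add, τ0_aeval, τ0_apply]
    show (Ga k g + Gu k g) * Gc k g
      = Gc k g * (Ga k g + Gu k g) + Gc k g * aeval (Gc k g) g
    exact key_ac _ _ _ _ (r1 k g) (r2 k g)
  | cu =>
    simp only [map_mul, τ0_apply]
    show Gc k g * -Gu k g = -Gu k g * Gc k g
    exact key_cu _ _ (r2 k g)
  | au =>
    simp only [map_mul, map_add, τ0_aeval, τ0_apply]
    show (Ga k g + Gu k g) * -Gu k g
      = -Gu k g * (Ga k g + Gu k g) + -Gu k g * aeval (Gc k g) g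
    exact key_au _ _ _ (r3 k g)
  | bc =>
    simp only [Gγ, map_mul, map_add, map_ofNat, τ0_Gh, τ0_apply]
    show Gb k g * Gc k g
      = Gc k g * Gb k g + Gc k g * (GH k g + -Gu k g + 2 * (Ga k g + Gu k g))
    exact key_bc (a := Ga k g) (b := Gb k g) (c := Gc k g) (u := Gu k g) (h := GH k g)
      (by rw [← GΓ]; exact r4 k g)
  | bu =>
    simp only [Gγ, map_mul, map_add, map_ofNat, τ0_Gh, τ0_apply]
    show Gb k g * -Gu k g
      = -Gu k g * Gb k g + -Gu k g * (GH k g + -Gu k g + 2 * (Ga k g + Gu k g))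
    exact key_bu (a := Ga k g) (b := Gb k g) (u := Gu k g) (h := GH k g)
      (by rw [← GΓ]; exact r5 k g)
  | ba =>
    simp only [map_mul, map_add, map_sub, τ0_Gh, τ0_apply]
    show Gb k g * (Ga k g + Gu k g)
      = (Ga k g + Gu k g + GH k g) * Gb k g
        + (GH k g - -Gu k g) * (Ga k g + Gu k g)
    exact key_ba (a := Ga k g) (b := Gb k g) (u := Gu k g) (h := GH k g)
      (r6 k g) (by rw [← GΓ]; exact r5 k g) (commUH k g)

/-- `τ` as an algebra endomorphism of `𝒢`. -/
def τhom : GAlg k g →ₐ[k] GAlg k g :=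
  RingQuot.liftAlgHom k ⟨τ0 k g, τ0_rel k g⟩

lemma τhom_mk (x : FreeAlgebra k (Fin 4)) :
    τhom k g (RingQuot.mkAlgHom k (GRel k g) x) = τ0 k g x :=
  RingQuot.liftAlgHom_mkAlgHom_apply k _ _ _

lemma τhom_a : τhom k g (Ga k g) = Ga k g + Gu k g := by
  rw [Ga, τhom_mk, τ0_apply]; rfl

lemma τhom_b : τhom k g (Gb k g) = Gb k g := by
  rw [Gb, τhom_mk, τ0_apply]; rfl

lemma τhom_c : τhom k g (Gc k g) = Gc k g := by
  rw [Gc, τhom_mk, τ0_apply]; rfl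

lemma τhom_u : τhom k g (Gu k g) = -Gu k g := by
  rw [Gu, τhom_mk, τ0_apply]; rfl

lemma τhom_invol : (τhom k g).comp (τhom k g) = AlgHom.id k (GAlg k g) := by
  apply RingQuot.ringQuot_ext'
  apply FreeAlgebra.hom_ext
  funext i
  fin_cases i <;>
    simp only [Function.comp_apply, AlgHom.coe_comp, AlgHom.coe_id, id_eq] <;>
    [ (show τhom k g (τhom k g (Ga k g)) = Ga k g);
      (show τhom k g (τhom k g (Gb k g)) = Gb k g);
      (show τhom k g (τhom k g (Gc k g)) = Gc k g);
      (show τhom k g (τhom k g (Gu k g)) = Gu k g)] <;>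
    simp [τhom_a, τhom_b, τhom_c, τhom_u]

end Gaux

theorem stmt13 (k : Type) [Field k] [IsAlgClosed k] [CharZero k]
    (g : k[X]) (hg : 1 ≤ g.natDegree) :
    ∃ τ : GAlg k g ≃ₐ[k] GAlg k g,
      τ (Ga k g) = Ga k g + Gu k g ∧ τ (Gu k g) = -Gu k g ∧
      τ (Gc k g) = Gc k g ∧ τ (Gb k g) = Gb k g ∧
      ∀ x, τ (τ x) = x := by
  refine ⟨AlgEquiv.ofAlgHom (Gaux.τhom k g) (Gaux.τhom k g)
    (Gaux.τhom_invol k g) (Gaux.τhom_invol k g),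
    Gaux.τhom_a k g, Gaux.τhom_u k g, Gaux.τhom_c k g, Gaux.τhom_b k g, fun x => ?_⟩
  simpa using AlgHom.congr_fun (Gaux.τhom_invol k g) x
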